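/- There exists a unique Z ∈ R with Z − z ∈ t·R such that Z = z·exp( σ·((q_s·Z^s + t·Q̃(Z))^d − q_s^d·z^{s·d}) ). Moreover, this Z satisfies Z − z ∈ K⟦z^{−1}⟧⟦t⟧, i.e. for every l ≥ 0 the coefficient of t^l in Z − z is a formal power series in z^{−1} (has no positive powers of z). -/

import Mathlib

/-!
Write the equation as `Z = Φ(Z)`. Modulo `t^(n+1)`, replacing `Z` by `Z + a tⁿ` (`n ≥ 1`)
changes `Φ(Z)` by `λ a tⁿ`, where `λ = σ d s q_s^d z^(sd)` is `z · ∂Φ/∂Z` at `Z = z`. As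
`1 - λ ≠ 0`, the coefficients are determined recursively by
`(1 - λ) Zₙ = [tⁿ] Φ(Z₀ + ⋯ + Z_{n-1} t^(n-1))`, which gives existence and uniqueness.

The fixed-point equation is useless for integrality: the powers of the exponent acquire poles of
unbounded order in `z`. Differentiating in `t` linearizes it instead, `Z' = Z'·A(Z) + B(Z)` with
`A = Z ∂F/∂Z` and `B = Z ∂F/∂t` for the exponent `F(t, Z)`. At order `t^(n-1)` this reads
`n (1 - λ) Zₙ = Σ_{i < n-1} (i+1) Z_{i+1} A_{n-1-i} + B_{n-1}`. Inductively `Z₀ = z` has a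
simple pole and `Z₁, …, Z_{n-1}` are regular, which bounds the poles of all coefficients of
`A(Z)` and `B(Z)` by `z^(sd)` (every factor `t` comes with a `Q̃` of degree `< s`), while
`1 - λ` has a pole of order exactly `sd`; hence `Zₙ` is regular.
-/

open PowerSeries

/-- The formal exponential on `L⟦t⟧`, intended for arguments in `t·L⟦t⟧`. -/
noncomputable def pexpL (L : Type*) [Field L] (F : PowerSeries L) : PowerSeries L :=
  PowerSeries.mk fun n =>
    ∑ k ∈ Finset.range (n + 1), ((k.factorial : L))⁻¹ * PowerSeries.coeff (R := L) n (F ^ k)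

/-- The element `z = (z⁻¹)⁻¹` of `L = K((z⁻¹))`. -/
noncomputable def zElem (K : Type*) [Field K] : LaurentSeries K :=
  HahnSeries.single (-1 : ℤ) (1 : K)

noncomputable def cK (K : Type*) [Field K] : K →+* PowerSeries (LaurentSeries K) :=
  (PowerSeries.C (R := LaurentSeries K)).comp HahnSeries.C

namespace PowerSeries

section Congruence

variable {S : Type*} [CommRing S] {n : ℕ}

theorem smodEq_X_pow_iff {U V : S⟦X⟧} :
    U ≡ V [SMOD Ideal.span {X ^ n}] ↔ ∀ m < n, coeff m U = coeff m V := by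
  simp only [SModEq.sub_mem, Ideal.mem_span_singleton, X_pow_dvd_iff, map_sub, sub_eq_zero]

theorem smodEq_trunc (n : ℕ) (U : S⟦X⟧) : U ≡ trunc n U [SMOD Ideal.span {X ^ n}] :=
  smodEq_X_pow_iff.2 fun _ hm => (coeff_coe_trunc_of_lt hm).symm

theorem X_pow_mul_smodEq (n : ℕ) (U : S⟦X⟧) :
    X ^ n * U ≡ C (constantCoeff U) * X ^ n [SMOD Ideal.span {X ^ (n + 1)}] := by
  refine smodEq_X_pow_iff.2 fun m hm => ?_
  rw [coeff_X_pow_mul', coeff_C_mul_X_pow]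
  split_ifs <;> first | rfl | omega | (subst_vars; simp)

theorem X_pow_mul_X_pow_smodEq_zero (hn : n ≠ 0) :
    (X ^ n * X ^ n : S⟦X⟧) ≡ 0 [SMOD Ideal.span {X ^ (n + 1)}] :=
  SModEq.zero.2 <| Ideal.mem_span_singleton.2 <| by
    rw [← pow_add]; exact pow_dvd_pow _ (by omega)

def IsCausal (Φ : S⟦X⟧ → S⟦X⟧) : Prop :=
  ∀ n W W', W ≡ W' [SMOD Ideal.span {X ^ n}] → Φ W ≡ Φ W' [SMOD Ideal.span {X ^ n}]

def PerturbsAt (n : ℕ) (c : S) (U U' : S⟦X⟧) : Prop :=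
  U' ≡ U + C c * X ^ n [SMOD Ideal.span {X ^ (n + 1)}]

variable {c e : S} {U U' V V' : S⟦X⟧}

theorem perturbsAt_iff : PerturbsAt n c U U' ↔
    ∀ m ≤ n, coeff m U' = coeff m U + if m = n then c else 0 := by
  simp only [PerturbsAt, smodEq_X_pow_iff, Nat.lt_succ_iff, map_add, coeff_C_mul_X_pow]

theorem PerturbsAt.coeff_eq (h : PerturbsAt n c U U') : coeff n U' = coeff n U + c := by
  simpa using perturbsAt_iff.1 h n le_rfl

theorem perturbsAt_add_C_mul_X_pow (n : ℕ) (c : S) (U : S⟦X⟧) :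
    PerturbsAt n c U (U + C c * X ^ n) :=
  SModEq.rfl

theorem perturbsAt_zero (n : ℕ) (U : S⟦X⟧) : PerturbsAt n 0 U U := by
  simp [PerturbsAt]

theorem PerturbsAt.add (hU : PerturbsAt n c U U') (hV : PerturbsAt n e V V') :
    PerturbsAt n (c + e) (U + V) (U' + V') := by
  unfold PerturbsAt at *
  calc U' + V' ≡ U + C c * X ^ n + (V + C e * X ^ n) [SMOD Ideal.span {X ^ (n + 1)}] :=
        hU.add hV
    _ = U + V + C (c + e) * X ^ n := by rw [map_add]; ring

theorem PerturbsAt.sub_const (hU : PerturbsAt n c U U') (V : S⟦X⟧) :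
    PerturbsAt n c (U - V) (U' - V) := by
  simpa [sub_eq_add_neg] using hU.add (perturbsAt_zero n (-V))

theorem PerturbsAt.sum {ι : Type*} {s : Finset ι} {c : ι → S} {U U' : ι → S⟦X⟧}
    (h : ∀ i ∈ s, PerturbsAt n (c i) (U i) (U' i)) :
    PerturbsAt n (∑ i ∈ s, c i) (∑ i ∈ s, U i) (∑ i ∈ s, U' i) := by
  unfold PerturbsAt at *
  calc ∑ i ∈ s, U' i ≡ ∑ i ∈ s, (U i + C (c i) * X ^ n) [SMOD Ideal.span {X ^ (n + 1)}] :=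
        SModEq.sum h
    _ = ∑ i ∈ s, U i + C (∑ i ∈ s, c i) * X ^ n := by
      rw [Finset.sum_add_distrib, map_sum, Finset.sum_mul]

theorem PerturbsAt.mul (hn : n ≠ 0) (hU : PerturbsAt n c U U') (hV : PerturbsAt n e V V') :
    PerturbsAt n (c * constantCoeff V + constantCoeff U * e) (U * V) (U' * V') := by
  unfold PerturbsAt at *
  calc U' * V' ≡ (U + C c * X ^ n) * (V + C e * X ^ n) [SMOD Ideal.span {X ^ (n + 1)}] :=
        hU.mul hV
    _ = U * V + C c * (X ^ n * V) + C e * (X ^ n * U) + C (c * e) * (X ^ n * X ^ n) := by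
      rw [map_mul]; ring
    _ ≡ U * V + C c * (C (constantCoeff V) * X ^ n) + C e * (C (constantCoeff U) * X ^ n)
        + C (c * e) * 0 [SMOD Ideal.span {X ^ (n + 1)}] := by
      gcongr U * V + C c * ?_ + C e * ?_ + C (c * e) * ?_
      exacts [X_pow_mul_smodEq n V, X_pow_mul_smodEq n U, X_pow_mul_X_pow_smodEq_zero hn]
    _ = U * V + C (c * constantCoeff V + constantCoeff U * e) * X ^ n := by
      simp only [map_add, map_mul]; ring

theorem PerturbsAt.C_mul (hn : n ≠ 0) (a : S) (hU : PerturbsAt n c U U') :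
    PerturbsAt n (a * c) (C a * U) (C a * U') := by
  simpa using (perturbsAt_zero n (C a)).mul hn hU

theorem PerturbsAt.pow (hn : n ≠ 0) (hU : PerturbsAt n c U U') (k : ℕ) :
    PerturbsAt n (k * constantCoeff U ^ (k - 1) * c) (U ^ k) (U' ^ k) := by
  induction k with
  | zero => simpa using perturbsAt_zero n (1 : S⟦X⟧)
  | succ k ih =>
    rw [pow_succ, pow_succ]
    convert ih.mul hn hU using 1
    rcases k with _ | k
    · simp
    · simp only [map_pow, Nat.add_sub_cancel]; push_cast; ring

theorem PerturbsAt.X_mul (hU : PerturbsAt n c U U') : PerturbsAt n 0 (X * U) (X * U') := by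
  unfold PerturbsAt at *
  calc X * U' ≡ X * (U + C c * X ^ n) [SMOD Ideal.span {X ^ (n + 1)}] := by gcongr X * ?_
    _ = X * U + C c * X ^ (n + 1) := by ring
    _ ≡ X * U + C c * 0 [SMOD Ideal.span {X ^ (n + 1)}] := by
      gcongr X * U + C c * ?_
      exact SModEq.zero.2 (Ideal.mem_span_singleton_self _)
    _ = X * U + C 0 * X ^ n := by simp

end Congruence

section Exp

variable {L : Type*} [Field L] {n : ℕ} {F G : L⟦X⟧}

theorem coeff_pexpL (n : ℕ) (F : L⟦X⟧) :
    coeff n (pexpL L F) =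
      ∑ k ∈ Finset.range (n + 1), (k.factorial : L)⁻¹ * coeff n (F ^ k) :=
  coeff_mk _ _

theorem constantCoeff_pexpL (F : L⟦X⟧) : constantCoeff (pexpL L F) = 1 := by
  rw [← coeff_zero_eq_constantCoeff_apply, coeff_pexpL]
  simp

theorem coeff_pow_eq_zero_of_lt (hF : constantCoeff F = 0) {m k : ℕ} (hmk : m < k) :
    coeff m (F ^ k) = 0 :=
  X_pow_dvd_iff.1 (pow_dvd_pow_of_dvd (X_dvd_iff.2 hF) k) m hmk

theorem isCausal_pexpL : IsCausal (pexpL L) := fun _ _ _ h =>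
  smodEq_X_pow_iff.2 fun m hm => by
    simp only [coeff_pexpL, smodEq_X_pow_iff.1 (h.pow _) m hm]

theorem pexpL_eq_subst_exp [CharZero L] (hF : constantCoeff F = 0) :
    pexpL L F = (exp L).subst F := by
  ext n
  rw [coeff_pexpL, coeff_subst' (HasSubst.of_constantCoeff_zero' hF),
    finsum_eq_sum_of_support_subset _ (s := Finset.range (n + 1)) fun k hk => ?_]
  · refine Finset.sum_congr rfl fun k _ => ?_
    simp [coeff_exp]
  · by_contra hkn
    simp only [Finset.coe_range, Set.mem_Iio, not_lt] at hkn
    exact hk (by simp only [coeff_pow_eq_zero_of_lt hF (show n < k by omega), smul_zero])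

theorem derivative_pexpL [CharZero L] (hF : constantCoeff F = 0) :
    d⁄dX L (pexpL L F) = pexpL L F * d⁄dX L F := by
  rw [pexpL_eq_subst_exp hF, derivative_subst (HasSubst.of_constantCoeff_zero' hF),
    derivative_exp]

theorem PerturbsAt.pexpL (hn : n ≠ 0) (hF : constantCoeff F = 0) {c : L} {F' : L⟦X⟧}
    (h : PerturbsAt n c F F') : PerturbsAt n c (pexpL L F) (pexpL L F') := by
  refine perturbsAt_iff.2 fun m hm => ?_
  -- as `F` has no constant term, only the term `k = 1` of the series feels the perturbation
  have hpow k := perturbsAt_iff.1 (h.pow hn k) m hm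
  simp only [coeff_pexpL, hpow, mul_add, Finset.sum_add_distrib, add_right_inj, hF]
  split_ifs with hmn
  · rw [Finset.sum_eq_single 1 (fun k _ hk => ?_) (by rw [Finset.mem_range]; omega)]
    · simp
    · rcases k with _ | k <;> simp_all
  · simp

end Exp

section FixedPoint

variable {L : Type*} [Field L] {Φ : L⟦X⟧ → L⟦X⟧} {z₀ lam : L}

/-- `coeff n (Φ W) = fₙ (coeff 0 W, …, coeff (n - 1) W) + lam * coeff n W` for `n ≠ 0`. -/
structure IsTriangular (Φ : L⟦X⟧ → L⟦X⟧) (z₀ lam : L) : Prop where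
  isCausal : IsCausal Φ
  constantCoeff_apply : ∀ W, constantCoeff (Φ W) = z₀
  perturbsAt : ∀ n ≠ 0, ∀ W a, constantCoeff W = z₀ →
    PerturbsAt n (lam * a) (Φ W) (Φ (W + C a * X ^ n))

theorem smodEq_trunc_add_C_mul_X_pow (n : ℕ) (W : L⟦X⟧) :
    W ≡ (trunc n W : L⟦X⟧) + C (coeff n W) * X ^ n [SMOD Ideal.span {X ^ (n + 1)}] := by
  simpa [trunc_succ, monomial_eq_C_mul_X_pow] using smodEq_trunc (n + 1) W

theorem IsTriangular.coeff_apply (hΦ : IsTriangular Φ z₀ lam) {n : ℕ} (hn : n ≠ 0)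
    {W : L⟦X⟧} (hW : constantCoeff W = z₀) :
    coeff n (Φ W) = coeff n (Φ (trunc n W)) + lam * coeff n W := by
  have htrunc : constantCoeff (trunc n W : L⟦X⟧) = z₀ := by
    rw [← coeff_zero_eq_constantCoeff_apply, coeff_coe_trunc_of_lt (Nat.pos_of_ne_zero hn),
      coeff_zero_eq_constantCoeff_apply, hW]
  rw [smodEq_X_pow_iff.1 (hΦ.isCausal _ _ _ (smodEq_trunc_add_C_mul_X_pow n W)) n n.lt_succ_self,
    (hΦ.perturbsAt n hn _ _ htrunc).coeff_eq]

theorem IsTriangular.eq_apply_iff (hΦ : IsTriangular Φ z₀ lam) {W : L⟦X⟧}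
    (hW : constantCoeff W = z₀) :
    W = Φ W ↔ ∀ n ≠ 0, (1 - lam) * coeff n W = coeff n (Φ (trunc n W)) := by
  constructor
  · intro hfix n hn
    have := hΦ.coeff_apply hn hW
    rw [← hfix] at this
    linear_combination this
  · intro hrec
    ext n
    rcases eq_or_ne n 0 with rfl | hn
    · simp [hW, hΦ.constantCoeff_apply]
    · rw [hΦ.coeff_apply hn hW, ← hrec n hn]
      ring

noncomputable def fixedPointCoeff (Φ : L⟦X⟧ → L⟦X⟧) (z₀ lam : L) : ℕ → L
  | 0 => z₀
  | n + 1 => (1 - lam)⁻¹ *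
      coeff (n + 1) (Φ (mk fun i => if _ : i < n + 1 then fixedPointCoeff Φ z₀ lam i else 0))

theorem IsTriangular.existsUnique_eq_apply (hΦ : IsTriangular Φ z₀ lam) (hlam : 1 - lam ≠ 0) :
    ∃! Z : L⟦X⟧, constantCoeff Z = z₀ ∧ Z = Φ Z := by
  set f := fixedPointCoeff Φ z₀ lam
  have hf0 : constantCoeff (PowerSeries.mk f) = z₀ := by
    rw [← coeff_zero_eq_constantCoeff_apply, coeff_mk]; simp [f, fixedPointCoeff]
  have hf : PowerSeries.mk f = Φ (PowerSeries.mk f) := (hΦ.eq_apply_iff hf0).2 fun n hn => by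
    obtain ⟨m, rfl⟩ := Nat.exists_eq_succ_of_ne_zero hn
    have htrunc : (trunc (m + 1) (PowerSeries.mk f) : L⟦X⟧) =
        PowerSeries.mk fun i => if _ : i < m + 1 then f i else 0 := by
      ext i; simp [coeff_trunc]
    rw [htrunc, coeff_mk]
    simp only [f, fixedPointCoeff]
    field_simp
  refine ⟨PowerSeries.mk f, ⟨hf0, hf⟩, fun Z ⟨hZ0, hZ⟩ => ?_⟩
  have hrec := (hΦ.eq_apply_iff hZ0).1 hZ
  have hrecf := (hΦ.eq_apply_iff hf0).1 hf
  ext n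
  induction n using Nat.strong_induction_on with
  | _ n ih =>
    rcases eq_or_ne n 0 with rfl | hn
    · simp only [coeff_zero_eq_constantCoeff_apply, hZ0, hf0]
    · have htrunc : trunc n Z = trunc n (PowerSeries.mk f) := by
        ext i; simp only [coeff_trunc]; split_ifs with hi; exacts [ih i hi, rfl]
      refine mul_left_cancel₀ hlam ?_
      rw [hrec n hn, hrecf n hn, htrunc]

end FixedPoint

theorem coeff_mul_eq_sum_range_add {S : Type*} [CommRing S] (k : ℕ) (U V : S⟦X⟧) :
    coeff k (U * V) =
      ∑ i ∈ Finset.range k, coeff i U * coeff (k - i) V + coeff k U * constantCoeff V := by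
  rw [coeff_mul, Finset.Nat.sum_antidiagonal_eq_sum_range_succ_mk, Finset.sum_range_succ,
    Nat.sub_self, coeff_zero_eq_constantCoeff_apply]

end PowerSeries

namespace LaurentSeries

section Weight

variable {R : Type*} [CommRing R] {a b : ℤ} {x y : LaurentSeries R}

theorem le_orderTop_mul [NoZeroDivisors R] (hx : (a : WithTop ℤ) ≤ x.orderTop)
    (hy : (b : WithTop ℤ) ≤ y.orderTop) :
    ((a + b : ℤ) : WithTop ℤ) ≤ (x * y).orderTop := by
  rw [HahnSeries.orderTop_mul, WithTop.coe_add]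
  exact add_le_add hx hy

theorem le_orderTop_of_le_orderTop_mul [NoZeroDivisors R] (hy : y.orderTop = b)
    (h : ((a + b : ℤ) : WithTop ℤ) ≤ (x * y).orderTop) :
    (a : WithTop ℤ) ≤ x.orderTop := by
  rw [HahnSeries.orderTop_mul, hy, WithTop.coe_add] at h
  exact (WithTop.add_le_add_iff_right WithTop.coe_ne_top).1 h

theorem le_orderTop_add (hx : (a : WithTop ℤ) ≤ x.orderTop)
    (hy : (a : WithTop ℤ) ≤ y.orderTop) :
    (a : WithTop ℤ) ≤ (x + y).orderTop :=
  (le_min hx hy).trans HahnSeries.min_orderTop_le_orderTop_add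

theorem le_orderTop_sum {ι : Type*} {s : Finset ι} {f : ι → LaurentSeries R}
    (h : ∀ i ∈ s, (a : WithTop ℤ) ≤ (f i).orderTop) :
    (a : WithTop ℤ) ≤ (∑ i ∈ s, f i).orderTop :=
  Finset.sum_induction f (fun x => (a : WithTop ℤ) ≤ x.orderTop) (fun _ _ => le_orderTop_add)
    (by simp) h

theorem le_orderTop_of_le (hx : (a : WithTop ℤ) ≤ x.orderTop) (hba : b ≤ a) :
    (b : WithTop ℤ) ≤ x.orderTop :=
  (WithTop.coe_le_coe.2 hba).trans hx

-- Multiplicative in `a`; every `z + t · K⟦z⁻¹⟧⟦t⟧` has weight `-1`.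
def HasWeight (a : ℤ) (U : (LaurentSeries R)⟦X⟧) : Prop :=
  (a : WithTop ℤ) ≤ (constantCoeff U).orderTop ∧
    ∀ m ≠ 0, ((a + 1 : ℤ) : WithTop ℤ) ≤ (coeff m U).orderTop

variable {U V : (LaurentSeries R)⟦X⟧}

theorem HasWeight.le_orderTop_coeff (h : HasWeight a U) (m : ℕ) :
    (a : WithTop ℤ) ≤ (coeff m U).orderTop := by
  rcases eq_or_ne m 0 with rfl | hm
  · simpa using h.1
  · exact le_orderTop_of_le (h.2 m hm) (by omega)

theorem HasWeight.mono (h : HasWeight a U) (hba : b ≤ a) : HasWeight b U :=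
  ⟨le_orderTop_of_le h.1 hba, fun m hm => le_orderTop_of_le (h.2 m hm) (by omega)⟩

theorem HasWeight.add (hU : HasWeight a U) (hV : HasWeight a V) : HasWeight a (U + V) :=
  ⟨by simpa using le_orderTop_add hU.1 hV.1,
    fun m hm => by simpa using le_orderTop_add (hU.2 m hm) (hV.2 m hm)⟩

theorem hasWeight_zero (a : ℤ) : HasWeight a (0 : (LaurentSeries R)⟦X⟧) := by
  simp [HasWeight]

theorem HasWeight.sum {ι : Type*} {s : Finset ι} {U : ι → (LaurentSeries R)⟦X⟧}
    (h : ∀ i ∈ s, HasWeight a (U i)) : HasWeight a (∑ i ∈ s, U i) :=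
  Finset.sum_induction U (HasWeight a) (fun _ _ => HasWeight.add) (hasWeight_zero a) h

theorem HasWeight.mul [NoZeroDivisors R] (hU : HasWeight a U) (hV : HasWeight b V) :
    HasWeight (a + b) (U * V) := by
  refine ⟨by simpa using le_orderTop_mul hU.1 hV.1, fun m hm => ?_⟩
  rw [coeff_mul]
  refine le_orderTop_sum fun p hp => ?_
  rcases eq_or_ne p.1 0 with h1 | h1
  · have h2 : p.2 ≠ 0 := by rw [Finset.HasAntidiagonal.mem_antidiagonal] at hp; omega
    rw [h1, coeff_zero_eq_constantCoeff_apply]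
    exact le_orderTop_of_le (le_orderTop_mul hU.1 (hV.2 _ h2)) (by omega)
  · exact le_orderTop_of_le (le_orderTop_mul (hU.2 _ h1) (hV.le_orderTop_coeff _)) (by omega)

theorem hasWeight_C (h : (a : WithTop ℤ) ≤ x.orderTop) : HasWeight a (C x) :=
  ⟨by simpa using h, fun m hm => by simp [coeff_C, hm]⟩

theorem hasWeight_C_C (r : R) : HasWeight 0 (C (HahnSeries.C r) : (LaurentSeries R)⟦X⟧) :=
  hasWeight_C HahnSeries.orderTop_single_le

theorem hasWeight_one : HasWeight 0 (1 : (LaurentSeries R)⟦X⟧) := by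
  simpa using hasWeight_C_C (1 : R)

theorem HasWeight.pow [NoZeroDivisors R] (h : HasWeight a U) (k : ℕ) :
    HasWeight (k * a) (U ^ k) := by
  induction k with
  | zero => simpa using hasWeight_one
  | succ k ih => simpa [pow_succ, add_mul] using ih.mul h

theorem hasWeight_natCast (k : ℕ) : HasWeight 0 (k : (LaurentSeries R)⟦X⟧) := by
  simpa using hasWeight_C_C (R := R) k

theorem hasWeight_trunc {n : ℕ} (hn : n ≠ 0) (hU0 : ↑(-1 : ℤ) ≤ (constantCoeff U).orderTop)
    (hU : ∀ m < n, m ≠ 0 → 0 ≤ (coeff m U).orderTop) :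
    HasWeight (-1) (trunc n U : (LaurentSeries R)⟦X⟧) := by
  refine ⟨?_, fun m hm => ?_⟩
  · rwa [← coeff_zero_eq_constantCoeff_apply, coeff_coe_trunc_of_lt (Nat.pos_of_ne_zero hn),
      coeff_zero_eq_constantCoeff_apply]
  · rw [Polynomial.coeff_coe, coeff_trunc]
    split_ifs with hmn
    · simpa using hU m hmn hm
    · simp

theorem HasWeight.X_mul (h : HasWeight (a + 1) U) : HasWeight a (X * U) := by
  refine ⟨by simp, fun m hm => ?_⟩
  obtain ⟨m, rfl⟩ := Nat.exists_eq_succ_of_ne_zero hm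
  rw [coeff_succ_X_mul]
  exact h.le_orderTop_coeff m

end Weight

section Integrality

variable {K : Type*} [Field K] [CharZero K]

instance : CharZero (LaurentSeries K) :=
  (RingHom.charZero_iff HahnSeries.C_injective).1 ‹_›

theorem orderTop_natCast {k : ℕ} (hk : k ≠ 0) : (k : LaurentSeries K).orderTop = 0 := by
  rw [← map_natCast HahnSeries.C, HahnSeries.C_apply, HahnSeries.orderTop_single (by simpa),
    WithTop.coe_zero]

theorem zero_le_orderTop_coeff_of_derivative_eq
    {A B : (LaurentSeries K)⟦X⟧ → (LaurentSeries K)⟦X⟧} {N : ℤ}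
    (hAc : IsCausal A) (hBc : IsCausal B)
    (hA : ∀ W, HasWeight (-1) W → ∀ m, ↑(-N) ≤ (coeff m (A W)).orderTop)
    (hB : ∀ W, HasWeight (-1) W → ∀ m, ↑(-N) ≤ (coeff m (B W)).orderTop)
    {Z : (LaurentSeries K)⟦X⟧} (hZ0 : ↑(-1 : ℤ) ≤ (constantCoeff Z).orderTop)
    (hAZ : (1 - constantCoeff (A Z)).orderTop = (-N : ℤ))
    (hode : d⁄dX _ Z = d⁄dX _ Z * A Z + B Z) {n : ℕ} (hn : n ≠ 0) :
    0 ≤ (coeff n Z).orderTop := by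
  induction n using Nat.strong_induction_on with
  | _ n ih =>
  obtain ⟨k, rfl⟩ := Nat.exists_eq_succ_of_ne_zero hn
  set W : (LaurentSeries K)⟦X⟧ := ↑(trunc (k + 1) Z)
  have hW : HasWeight (-1) W := hasWeight_trunc k.succ_ne_zero hZ0 ih
  have hAW := smodEq_X_pow_iff.1 (hAc _ _ _ (smodEq_trunc (k + 1) Z))
  have hcoeff : coeff (k + 1) Z * (((k : LaurentSeries K) + 1) * (1 - constantCoeff (A Z))) =
      ∑ i ∈ Finset.range k, coeff i (d⁄dX _ Z) * coeff (k - i) (A Z) + coeff k (B Z) := by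
    have := congrArg (coeff k) hode
    rw [map_add, coeff_mul_eq_sum_range_add, coeff_derivative] at this
    linear_combination this
  refine le_orderTop_of_le_orderTop_mul (b := -N)
    (y := ((k : LaurentSeries K) + 1) * (1 - constantCoeff (A Z))) ?_ ?_
  · rw [HahnSeries.orderTop_mul, hAZ, ← Nat.cast_succ, orderTop_natCast k.succ_ne_zero, zero_add]
  · rw [hcoeff, zero_add]
    refine le_orderTop_add (le_orderTop_sum fun i hi => ?_) ?_
    · have hi : i < k := Finset.mem_range.1 hi
      rw [coeff_derivative, hAW _ (by omega)]
      have hZi : 0 ≤ (coeff (i + 1) Z * ((i : LaurentSeries K) + 1)).orderTop := by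
        rw [HahnSeries.orderTop_mul, ← Nat.cast_succ, orderTop_natCast i.succ_ne_zero, add_zero]
        exact ih (i + 1) (by omega) i.succ_ne_zero
      simpa using le_orderTop_mul (a := 0) hZi (hA W hW (k - i))
    · rw [smodEq_X_pow_iff.1 (hBc _ _ _ (smodEq_trunc (k + 1) Z)) k k.lt_succ_self]
      exact hB W hW k

end Integrality

theorem mem_range_ofPowerSeries_of_zero_le_orderTop {R : Type*} [Semiring R]
    {x : LaurentSeries R} (hx : 0 ≤ x.orderTop) :
    x ∈ Set.range (HahnSeries.ofPowerSeries ℤ R) := by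
  rcases eq_or_ne x 0 with rfl | hx0
  · exact ⟨0, map_zero _⟩
  · rw [← HahnSeries.order_eq_orderTop_of_ne_zero hx0, ← WithTop.coe_zero,
      WithTop.coe_le_coe] at hx
    exact ⟨_, LaurentSeries.X_order_mul_powerSeriesPart (Int.natAbs_of_nonneg hx)⟩

end LaurentSeries

namespace FirstDeformation

open LaurentSeries

section Deformation

variable (K : Type*) [Field K] (s d : ℕ) (q : ℕ → K) (σ : K)

noncomputable def zSeries : (LaurentSeries K)⟦X⟧ := C (zElem K)

noncomputable def qTilde (W : (LaurentSeries K)⟦X⟧) : (LaurentSeries K)⟦X⟧ :=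
  ∑ j ∈ Finset.Icc 1 (s - 1), cK K (q j) * W ^ j

-- `W · Q̃'(W)`
noncomputable def qTildeEuler (W : (LaurentSeries K)⟦X⟧) : (LaurentSeries K)⟦X⟧ :=
  ∑ j ∈ Finset.Icc 1 (s - 1), cK K (q j) * ((j : (LaurentSeries K)⟦X⟧) * W ^ j)

noncomputable def deformedPoly (W : (LaurentSeries K)⟦X⟧) : (LaurentSeries K)⟦X⟧ :=
  cK K (q s) * W ^ s + X * qTilde K s q W

noncomputable def exponent (W : (LaurentSeries K)⟦X⟧) : (LaurentSeries K)⟦X⟧ :=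
  cK K σ * (deformedPoly K s q W ^ d - cK K (q s) ^ d * zSeries K ^ (s * d))

noncomputable def rhs (W : (LaurentSeries K)⟦X⟧) : (LaurentSeries K)⟦X⟧ :=
  zSeries K * pexpL (LaurentSeries K) (exponent K s d q σ W)

-- `W · ∂F/∂W` and `W · ∂F/∂t` for the exponent `F(t, W)`
noncomputable def scaledPartialW (W : (LaurentSeries K)⟦X⟧) : (LaurentSeries K)⟦X⟧ :=
  cK K σ * ((d : (LaurentSeries K)⟦X⟧) * (deformedPoly K s q W ^ (d - 1) *
    (cK K (q s) * ((s : (LaurentSeries K)⟦X⟧) * W ^ s) + X * qTildeEuler K s q W)))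

noncomputable def scaledPartialT (W : (LaurentSeries K)⟦X⟧) : (LaurentSeries K)⟦X⟧ :=
  cK K σ * ((d : (LaurentSeries K)⟦X⟧) *
    (deformedPoly K s q W ^ (d - 1) * (W * qTilde K s q W)))

noncomputable def lam : LaurentSeries K :=
  HahnSeries.C (σ * d * s * q s ^ d) * zElem K ^ (s * d)

variable {K s d q σ} {W : (LaurentSeries K)⟦X⟧}

theorem cK_apply (x : K) : cK K x = C (HahnSeries.C x) := rfl

theorem constantCoeff_deformedPoly (hW : constantCoeff W = zElem K) :
    constantCoeff (deformedPoly K s q W) = HahnSeries.C (q s) * zElem K ^ s := by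
  simp only [deformedPoly, cK_apply, map_add, map_mul, map_pow, constantCoeff_C,
    constantCoeff_X, hW, zero_mul, add_zero]

theorem constantCoeff_exponent (hW : constantCoeff W = zElem K) :
    constantCoeff (exponent K s d q σ W) = 0 := by
  simp only [exponent, constantCoeff_deformedPoly hW, cK_apply, zSeries, map_mul, map_sub,
    map_pow, constantCoeff_C, mul_pow, pow_mul, sub_self, mul_zero]

theorem constantCoeff_rhs (W : (LaurentSeries K)⟦X⟧) :
    constantCoeff (rhs K s d q σ W) = zElem K := by
  simp [rhs, zSeries, constantCoeff_pexpL]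

theorem constantCoeff_scaledPartialW (hs : 0 < s) (hd : 0 < d)
    (hW : constantCoeff W = zElem K) :
    constantCoeff (scaledPartialW K s d q σ W) = lam K s d q σ := by
  obtain ⟨u, rfl⟩ : ∃ u, s = u + 1 := ⟨s - 1, by omega⟩
  obtain ⟨e, rfl⟩ : ∃ e, d = e + 1 := ⟨d - 1, by omega⟩
  simp only [scaledPartialW, lam, cK_apply, map_mul, map_add, map_pow, map_natCast,
    constantCoeff_C, constantCoeff_X, hW, constantCoeff_deformedPoly hW, zero_mul, add_zero]
  push_cast
  ring

theorem isCausal_qTilde : IsCausal (qTilde K s q) := fun _ _ _ h =>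
  SModEq.sum fun j _ => by gcongr cK K (q j) * ?_ ^ j

theorem isCausal_qTildeEuler : IsCausal (qTildeEuler K s q) := fun _ _ _ h =>
  SModEq.sum fun j _ => by gcongr cK K (q j) * (_ * ?_ ^ j)

theorem isCausal_deformedPoly : IsCausal (deformedPoly K s q) := fun _ _ _ h => by
  unfold deformedPoly
  gcongr cK K (q s) * ?_ ^ s + X * ?_
  exact isCausal_qTilde _ _ _ h

theorem isCausal_rhs : IsCausal (rhs K s d q σ) := fun _ _ _ h => by
  unfold rhs exponent
  gcongr zSeries K * ?_
  refine isCausal_pexpL _ _ _ ?_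
  gcongr cK K σ * (?_ ^ d - _)
  exact isCausal_deformedPoly _ _ _ h

theorem isCausal_scaledPartialW : IsCausal (scaledPartialW K s d q σ) := fun _ _ _ h => by
  unfold scaledPartialW
  gcongr cK K σ * (_ * (?_ ^ (d - 1) * (cK K (q s) * (_ * ?_ ^ s) + X * ?_)))
  exacts [isCausal_deformedPoly _ _ _ h, isCausal_qTildeEuler _ _ _ h]

theorem isCausal_scaledPartialT : IsCausal (scaledPartialT K s d q σ) := fun _ _ _ h => by
  unfold scaledPartialT
  gcongr cK K σ * (_ * (?_ ^ (d - 1) * (?_ * ?_)))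
  exacts [isCausal_deformedPoly _ _ _ h, isCausal_qTilde _ _ _ h]

end Deformation

section Perturbation

variable {K : Type*} [Field K] {s d : ℕ} {q : ℕ → K} {σ : K} {W : (LaurentSeries K)⟦X⟧}

theorem perturbsAt_rhs (hs : 0 < s) (hd : 0 < d) {n : ℕ} (hn : n ≠ 0)
    (hW : constantCoeff W = zElem K) (a : LaurentSeries K) :
    PerturbsAt n (lam K s d q σ * a) (rhs K s d q σ W) (rhs K s d q σ (W + C a * X ^ n)) := by
  have hW' := perturbsAt_add_C_mul_X_pow n a W
  have hQ := PerturbsAt.sum (s := Finset.Icc 1 (s - 1))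
    fun j _ => (hW'.pow hn j).C_mul hn (HahnSeries.C (q j))
  have hP : PerturbsAt n (HahnSeries.C (q s) * ((s : LaurentSeries K) * zElem K ^ (s - 1) * a))
      (deformedPoly K s q W) (deformedPoly K s q (W + C a * X ^ n)) := by
    have := ((hW'.pow hn s).C_mul hn (HahnSeries.C (q s))).add hQ.X_mul
    rwa [hW, add_zero] at this
  have hE := ((hP.pow hn d).sub_const (cK K (q s) ^ d * zSeries K ^ (s * d))).C_mul hn
    (HahnSeries.C σ)
  have hR := (hE.pexpL hn (constantCoeff_exponent hW)).C_mul hn (zElem K)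
  rw [constantCoeff_deformedPoly hW] at hR
  have key : lam K s d q σ * a = zElem K * (HahnSeries.C σ * ((d : LaurentSeries K) *
      (HahnSeries.C (q s) * zElem K ^ s) ^ (d - 1) *
        (HahnSeries.C (q s) * ((s : LaurentSeries K) * zElem K ^ (s - 1) * a)))) := by
    obtain ⟨u, rfl⟩ : ∃ u, s = u + 1 := ⟨s - 1, by omega⟩
    obtain ⟨e, rfl⟩ : ∃ e, d = e + 1 := ⟨d - 1, by omega⟩
    simp only [lam, Nat.add_sub_cancel, map_mul, map_pow, map_natCast]
    ring
  rw [key]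
  exact hR

theorem isTriangular_rhs (hs : 0 < s) (hd : 0 < d) :
    IsTriangular (rhs K s d q σ) (zElem K) (lam K s d q σ) where
  isCausal := isCausal_rhs
  constantCoeff_apply := constantCoeff_rhs
  perturbsAt _ hn _ a hW := perturbsAt_rhs hs hd hn hW a

end Perturbation

section Lam

variable {K : Type*} [Field K] {s d : ℕ} {q : ℕ → K} {σ : K}

theorem zElem_pow (k : ℕ) : zElem K ^ k = HahnSeries.single (-(k : ℤ)) 1 := by
  simp [zElem, HahnSeries.single_pow]

theorem orderTop_one_sub_lam [CharZero K] (hs : 0 < s) (hd : 0 < d) (hne : σ * q s ≠ 0) :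
    (1 - lam K s d q σ).orderTop = (-(s * d : ℕ) : ℤ) := by
  have hc : σ * d * s * q s ^ d ≠ 0 := by
    have : σ ≠ 0 ∧ q s ≠ 0 := by simpa using hne
    simp [this.1, this.2, hs.ne', hd.ne']
  have hlam : (lam K s d q σ).orderTop = (-(s * d : ℕ) : ℤ) := by
    rw [lam, zElem_pow, HahnSeries.C_apply, HahnSeries.single_mul_single, zero_add, mul_one,
      HahnSeries.orderTop_single hc]
  rw [← neg_sub, HahnSeries.orderTop_neg, HahnSeries.orderTop_sub, hlam]
  rw [hlam, HahnSeries.orderTop_one, ← WithTop.coe_zero, WithTop.coe_lt_coe]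
  have : 0 < s * d := Nat.mul_pos hs hd
  omega

theorem one_sub_lam_ne_zero [CharZero K] (hs : 0 < s) (hd : 0 < d) (hne : σ * q s ≠ 0) :
    1 - lam K s d q σ ≠ 0 := fun h => by
  have := orderTop_one_sub_lam hs hd hne
  rw [h, HahnSeries.orderTop_zero] at this
  exact WithTop.top_ne_coe this

end Lam

section ODE

variable {K : Type*} [Field K] {s d : ℕ} {q : ℕ → K} {σ : K}

theorem derivative_cK_mul (x : K) (G : (LaurentSeries K)⟦X⟧) :
    d⁄dX _ (cK K x * G) = cK K x * d⁄dX _ G := by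
  rw [Derivation.leibniz, cK_apply, derivative_C, smul_zero, add_zero, smul_eq_mul]

theorem derivative_qTilde_mul (W : (LaurentSeries K)⟦X⟧) :
    d⁄dX _ (qTilde K s q W) * W = qTildeEuler K s q W * d⁄dX _ W := by
  simp only [qTilde, qTildeEuler, map_sum, Finset.sum_mul, derivative_cK_mul,
    Derivation.leibniz_pow]
  refine Finset.sum_congr rfl fun j hj => ?_
  obtain ⟨i, rfl⟩ : ∃ i, j = i + 1 := ⟨j - 1, by rw [Finset.mem_Icc] at hj; omega⟩
  simp only [nsmul_eq_mul, smul_eq_mul, Nat.add_sub_cancel, pow_succ]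
  ring

theorem derivative_deformedPoly_mul (hs : 0 < s) (W : (LaurentSeries K)⟦X⟧) :
    d⁄dX _ (deformedPoly K s q W) * W =
      (cK K (q s) * ((s : (LaurentSeries K)⟦X⟧) * W ^ s) + X * qTildeEuler K s q W) *
        d⁄dX _ W + W * qTilde K s q W := by
  obtain ⟨u, rfl⟩ : ∃ u, s = u + 1 := ⟨s - 1, by omega⟩
  have hQ := derivative_qTilde_mul (s := u + 1) (q := q) W
  rw [deformedPoly, map_add, derivative_cK_mul, Derivation.leibniz, derivative_X,
    Derivation.leibniz_pow]
  simp only [smul_eq_mul, nsmul_eq_mul, mul_one, Nat.add_sub_cancel]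
  linear_combination X * hQ

theorem derivative_exponent (W : (LaurentSeries K)⟦X⟧) :
    d⁄dX _ (exponent K s d q σ W) =
      cK K σ * ((d : (LaurentSeries K)⟦X⟧) *
        (deformedPoly K s q W ^ (d - 1) * d⁄dX _ (deformedPoly K s q W))) := by
  have hconst : d⁄dX _ (cK K (q s) ^ d * zSeries K ^ (s * d)) = 0 := by
    have : cK K (q s) ^ d * zSeries K ^ (s * d) =
        C (HahnSeries.C (q s) ^ d * zElem K ^ (s * d)) := by
      simp only [cK_apply, zSeries, map_mul, map_pow]
    rw [this, derivative_C]
  rw [exponent, derivative_cK_mul, map_sub, hconst, sub_zero, Derivation.leibniz_pow,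
    nsmul_eq_mul, smul_eq_mul]

theorem derivative_eq_of_eq_rhs [CharZero K] (hs : 0 < s) {Z : (LaurentSeries K)⟦X⟧}
    (hZ0 : constantCoeff Z = zElem K) (hZ : Z = rhs K s d q σ Z) :
    d⁄dX _ Z = d⁄dX _ Z * scaledPartialW K s d q σ Z + scaledPartialT K s d q σ Z := by
  have hlog : d⁄dX _ Z = d⁄dX _ (exponent K s d q σ Z) * Z := by
    calc d⁄dX _ Z = d⁄dX _ (zSeries K * pexpL _ (exponent K s d q σ Z)) := congrArg _ hZ
      _ = zSeries K * (pexpL _ (exponent K s d q σ Z) * d⁄dX _ (exponent K s d q σ Z)) := by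
        rw [Derivation.leibniz, derivative_pexpL (constantCoeff_exponent hZ0), zSeries,
          derivative_C, smul_zero, add_zero, smul_eq_mul]
      _ = d⁄dX _ (exponent K s d q σ Z) * rhs K s d q σ Z := by rw [rhs]; ring
      _ = _ := by rw [← hZ]
  rw [scaledPartialW, scaledPartialT]
  nth_rewrite 1 [hlog]
  rw [derivative_exponent]
  linear_combination
    (cK K σ * ((d : (LaurentSeries K)⟦X⟧) * deformedPoly K s q Z ^ (d - 1))) *
      derivative_deformedPoly_mul hs Z

end ODE

section Weights

variable {K : Type*} [Field K] {s d : ℕ} {q : ℕ → K} {σ : K} {W : (LaurentSeries K)⟦X⟧}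

theorem hasWeight_cK (x : K) : HasWeight 0 (cK K x) := hasWeight_C_C x

theorem hasWeight_qTilde (hW : HasWeight (-1) W) : HasWeight (1 - s) (qTilde K s q W) :=
  HasWeight.sum fun j hj => by
    rw [Finset.mem_Icc] at hj
    exact ((hasWeight_cK _).mul (hW.pow j)).mono (by omega)

theorem hasWeight_qTildeEuler (hW : HasWeight (-1) W) :
    HasWeight (1 - s) (qTildeEuler K s q W) :=
  HasWeight.sum fun j hj => by
    rw [Finset.mem_Icc] at hj
    exact ((hasWeight_cK _).mul ((hasWeight_natCast j).mul (hW.pow j))).mono (by omega)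

theorem hasWeight_deformedPoly (hW : HasWeight (-1) W) :
    HasWeight (-s) (deformedPoly K s q W) :=
  (((hasWeight_cK _).mul (hW.pow s)).mono (by omega)).add
    ((hasWeight_qTilde hW).mono (by omega)).X_mul

theorem hasWeight_scaledPartialW (hd : 0 < d) (hW : HasWeight (-1) W) :
    HasWeight (-(s * d : ℕ)) (scaledPartialW K s d q σ W) := by
  have hinner : HasWeight (-s) (cK K (q s) * ((s : (LaurentSeries K)⟦X⟧) * W ^ s) +
      X * qTildeEuler K s q W) :=
    (((hasWeight_cK _).mul ((hasWeight_natCast s).mul (hW.pow s))).mono (by omega)).add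
      ((hasWeight_qTildeEuler hW).mono (by omega)).X_mul
  refine ((hasWeight_cK σ).mul ((hasWeight_natCast d).mul
    (((hasWeight_deformedPoly hW).pow (d - 1)).mul hinner))).mono (le_of_eq ?_)
  push_cast [Nat.cast_sub hd]
  ring

theorem hasWeight_scaledPartialT (hd : 0 < d) (hW : HasWeight (-1) W) :
    HasWeight (-(s * d : ℕ)) (scaledPartialT K s d q σ W) := by
  refine ((hasWeight_cK σ).mul ((hasWeight_natCast d).mul
    (((hasWeight_deformedPoly hW).pow (d - 1)).mul (hW.mul (hasWeight_qTilde hW))))).mono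
    (le_of_eq ?_)
  push_cast [Nat.cast_sub hd]
  ring

end Weights

end FirstDeformation

open FirstDeformation LaurentSeries

theorem statement8 (K : Type*) [Field K] [CharZero K] (s d : ℕ) (hs : 2 ≤ s) (hd : 1 ≤ d)
    (q : ℕ → K) (σ : K) (hne : σ * q s ≠ 0) :
    -- `Q̃(Y) = Σ_{j=1}^{s−1} q_j Y^j`, evaluated on elements of `R = L⟦t⟧`:
    let L := LaurentSeries K
    let z : PowerSeries L := PowerSeries.C (R := L) (zElem K)
    let Qt : PowerSeries L → PowerSeries L :=
      fun Y => ∑ j ∈ Finset.Icc 1 (s - 1), cK K (q j) * Y ^ j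
    let SatEq : PowerSeries L → Prop := fun Z =>
      PowerSeries.constantCoeff (R := L) Z = zElem K ∧
        Z = z * pexpL L
          (cK K σ *
            ((cK K (q s) * Z ^ s + PowerSeries.X * Qt Z) ^ d - cK K (q s) ^ d * z ^ (s * d)))
    (∃! Z : PowerSeries L, SatEq Z) ∧
      ∀ Z : PowerSeries L, SatEq Z → ∀ l : ℕ,
        PowerSeries.coeff (R := L) l (Z - z) ∈ Set.range (HahnSeries.ofPowerSeries ℤ K) := by
  intro L z Qt SatEq
  change (∃! Z, constantCoeff Z = zElem K ∧ Z = rhs K s d q σ Z) ∧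
    ∀ Z, constantCoeff Z = zElem K ∧ Z = rhs K s d q σ Z →
      ∀ l, coeff l (Z - zSeries K) ∈ _
  have hs0 : 0 < s := by omega
  refine ⟨(isTriangular_rhs hs0 hd).existsUnique_eq_apply (one_sub_lam_ne_zero hs0 hd hne),
    fun Z ⟨hZ0, hZ⟩ l => ?_⟩
  rcases eq_or_ne l 0 with rfl | hl
  · rw [coeff_zero_eq_constantCoeff_apply, map_sub, hZ0, zSeries, constantCoeff_C, sub_self]
    exact ⟨0, map_zero _⟩
  rw [map_sub, zSeries, coeff_C, if_neg hl, sub_zero]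
  refine mem_range_ofPowerSeries_of_zero_le_orderTop <|
    zero_le_orderTop_coeff_of_derivative_eq isCausal_scaledPartialW isCausal_scaledPartialT
      (fun _ hW => (hasWeight_scaledPartialW hd hW).le_orderTop_coeff)
      (fun _ hW => (hasWeight_scaledPartialT hd hW).le_orderTop_coeff) ?_ ?_
      (derivative_eq_of_eq_rhs hs0 hZ0 hZ) hl
  · rw [hZ0, zElem, HahnSeries.orderTop_single one_ne_zero]
  · rw [constantCoeff_scaledPartialW hs0 hd hZ0, orderTop_one_sub_lam hs0 hd hne]
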